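/- arXiv:2601.20644 — 2 statements merged into one kernel-verified Lean document; each statement's English description precedes it below -/
import Mathlib

section
/- If c is a binary word of length n and c·1 (c followed by digit 1) is greedy with last digit 1, then the equivalence class of c·1 has the same cardinality as the equivalence class of c: every word d of length n+1 with v(d) = v(c·1) ends in 1. -/
noncomputable def phi : ℝ := (1 + Real.sqrt 5) / 2

/-- Value of a binary word in base φ. -/
noncomputable def val {n : ℕ} (c : Fin n → Fin 2) : ℝ :=
  ∑ i : Fin n, (c i : ℕ) / phi ^ ((i : ℕ) + 1)

/-- A binary word avoids the factor `011`. -/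
def Greedy {n : ℕ} (c : Fin n → Fin 2) : Prop :=
  ∀ i j k : Fin n, (j : ℕ) = (i : ℕ) + 1 → (k : ℕ) = (i : ℕ) + 2 →
    ¬ (c i = 0 ∧ c j = 1 ∧ c k = 1)

open Real
open scoped goldenRatio

/-!
Strip the leading digits of `d` and of the greedy word `w = c·1` simultaneously. The carry
`t = v(d') - v(w')` between the remaining suffixes starts at `0` and evolves by
`t ↦ φ t - (d₀ - w₀)`; the bounds `0 ≤ v < φ`, together with `v(w') < 1` whenever `w` has
leading digit `0`, keep it in `{0, φ⁻¹, 1}`. On the last digit a nonnegative carry forces `d`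
to end in `1`, and then `d ↦ init d` is a bijection between the two classes.
-/

lemma phi_eq_goldenRatio : phi = φ := rfl

lemma val_nonneg {n : ℕ} (w : Fin n → Fin 2) : 0 ≤ val w :=
  Finset.sum_nonneg fun i _ => by rw [phi_eq_goldenRatio]; positivity

lemma goldenRatio_mul_val {n : ℕ} (w : Fin (n + 1) → Fin 2) :
    φ * val w = (w 0 : ℕ) + val (Fin.tail w) := by
  simp only [val, phi_eq_goldenRatio, Fin.sum_univ_succ, Fin.tail, Finset.mul_sum, mul_add,
    Fin.val_zero, Fin.val_succ, pow_succ]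
  congr 1
  · field_simp
  · refine Finset.sum_congr rfl fun i _ => ?_
    field_simp

@[simp]
lemma val_fin_zero (w : Fin 0 → Fin 2) : val w = 0 := by simp [val]

lemma cast_val_fin_two_le_one (a : Fin 2) : ((a : ℕ) : ℝ) ≤ 1 := by
  exact_mod_cast Nat.lt_succ_iff.mp a.isLt

lemma val_snoc {n : ℕ} (w : Fin n → Fin 2) (b : Fin 2) :
    val (Fin.snoc w b : Fin (n + 1) → Fin 2) = val w + (b : ℕ) / φ ^ (n + 1) := by
  simp [val, Fin.sum_univ_castSucc, phi_eq_goldenRatio]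

lemma val_lt_goldenRatio : ∀ {n : ℕ} (w : Fin n → Fin 2), val w < φ
  | 0, _ => by rw [val_fin_zero]; exact goldenRatio_pos
  | n + 1, w => by
    have hw := goldenRatio_mul_val w
    have h := val_lt_goldenRatio (Fin.tail w)
    nlinarith [goldenRatio_sq, goldenRatio_pos, cast_val_fin_two_le_one (w 0)]

lemma Greedy.tail {n : ℕ} {w : Fin (n + 1) → Fin 2} (hw : Greedy w) : Greedy (Fin.tail w) :=
  fun i j k hj hk => hw i.succ j.succ k.succ (by simp [hj]) (by simp [hk])

lemma Greedy.eq_zero_of_zero_one {n : ℕ} {w : Fin (n + 3) → Fin 2} (hw : Greedy w)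
    (h₀ : w 0 = 0) (h₁ : w 1 = 1) : w 2 = 0 := by
  have := hw 0 1 2 rfl rfl
  omega

lemma val_lt_one_of_greedy_cons_zero : ∀ {n : ℕ} (w : Fin n → Fin 2),
    Greedy (Fin.cons 0 w : Fin (n + 1) → Fin 2) → val w < 1
  | 0, _, _ => by rw [val_fin_zero]; exact one_pos
  | 1, w, _ => by
    have hw := goldenRatio_mul_val w
    simp only [val_fin_zero, add_zero] at hw
    nlinarith [one_lt_goldenRatio, cast_val_fin_two_le_one (w 0)]
  | n + 2, w, hg => by
    have hw : Greedy w := by simpa using hg.tail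
    have hφw := goldenRatio_mul_val w
    rcases Fin.exists_fin_two.mp ⟨w 0, rfl⟩ with h₀ | h₀
    · have := val_lt_one_of_greedy_cons_zero (Fin.tail w) (by rwa [← h₀, Fin.cons_self_tail])
      rw [h₀, Fin.val_zero, Nat.cast_zero, zero_add] at hφw
      nlinarith [one_lt_goldenRatio]
    · have h₁ : w 1 = 0 := hg.eq_zero_of_zero_one rfl (by simpa using h₀)
      have htail : Fin.tail w = Fin.cons 0 (Fin.tail (Fin.tail w)) := by
        rw [← h₁]; exact (Fin.cons_self_tail _).symm
      have := val_lt_one_of_greedy_cons_zero _ (htail ▸ hw.tail)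
      have hφtail := goldenRatio_mul_val (Fin.tail w)
      rw [h₀, Fin.val_one, Nat.cast_one] at hφw
      rw [Fin.tail, Fin.succ_zero_eq_one, h₁, Fin.val_zero, Nat.cast_zero, zero_add] at hφtail
      nlinarith [goldenRatio_sq, goldenRatio_pos]

lemma goldenRatio_inv_eq_sub_one : φ⁻¹ = φ - 1 := by
  rw [inv_goldenRatio, ← one_sub_goldenConj]; ring

lemma goldenRatio_mul_sub_mem_zero_inv_one {t δ : ℝ} (ht : t ∈ ({0, φ⁻¹, 1} : Set ℝ))
    (hδ : δ ∈ ({-1, 0, 1} : Set ℝ)) (h₁ : -1 < φ * t - δ) (h₂ : φ * t - δ < φ) :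
    φ * t - δ ∈ ({0, φ⁻¹, 1} : Set ℝ) := by
  have hsq := goldenRatio_sq
  have hlt := goldenRatio_lt_two
  rw [goldenRatio_inv_eq_sub_one] at ht ⊢
  generalize φ = x at *
  simp only [Set.mem_insert_iff, Set.mem_singleton_iff] at ht hδ ⊢
  rcases ht with rfl | rfl | rfl <;> rcases hδ with rfl | rfl | rfl <;> grind

lemma cast_sub_cast_mem_fin_two (a b : Fin 2) :
    ((a : ℕ) : ℝ) - (b : ℕ) ∈ ({-1, 0, 1} : Set ℝ) := by
  fin_cases a <;> fin_cases b <;> norm_num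

lemma last_eq_one_of_val_eq_add :
    ∀ {n : ℕ} {w : Fin (n + 1) → Fin 2} (d : Fin (n + 1) → Fin 2), Greedy w →
      w (Fin.last n) = 1 → ∀ t ∈ ({0, φ⁻¹, 1} : Set ℝ), val d = t + val w →
      d (Fin.last n) = 1
  | 0, w, d, _, hw, t, ht, hd => by
    have ht₀ : 0 ≤ t := by rcases ht with rfl | rfl | rfl <;> positivity
    have hφd := goldenRatio_mul_val d
    have hφw := goldenRatio_mul_val w
    rw [show (0 : Fin 1) = Fin.last 0 from rfl, hw, Fin.val_one, Nat.cast_one] at hφw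
    simp only [val_fin_zero, add_zero] at hφd hφw
    rcases Fin.exists_fin_two.mp ⟨d (Fin.last 0), rfl⟩ with h | h
    · rw [show (0 : Fin 1) = Fin.last 0 from rfl, h, Fin.val_zero, Nat.cast_zero] at hφd
      exfalso
      nlinarith [goldenRatio_pos]
    · exact h
  | n + 1, w, d, hg, hw, t, ht, hd => by
    have ht₀ : 0 ≤ t := by rcases ht with rfl | rfl | rfl <;> positivity
    have hφd := goldenRatio_mul_val d
    have hφw := goldenRatio_mul_val w
    have hcarry : val (Fin.tail d) = φ * t - ((d 0 : ℕ) - (w 0 : ℕ)) + val (Fin.tail w) := by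
      linear_combination hφw - hφd + φ * hd
    refine last_eq_one_of_val_eq_add (Fin.tail d) hg.tail hw _
      (goldenRatio_mul_sub_mem_zero_inv_one ht (cast_sub_cast_mem_fin_two _ _) ?_ ?_) hcarry
    · rcases Fin.exists_fin_two.mp ⟨w 0, rfl⟩ with h | h
      · linarith [val_nonneg (Fin.tail d),
          val_lt_one_of_greedy_cons_zero (Fin.tail w) (by rwa [← h, Fin.cons_self_tail])]
      · rw [h, Fin.val_one, Nat.cast_one]
        linarith [mul_nonneg goldenRatio_pos.le ht₀, cast_val_fin_two_le_one (d 0)]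
    · linarith [val_lt_goldenRatio (Fin.tail d), val_nonneg (Fin.tail w)]

theorem class_append_one {n : ℕ} (c : Fin n → Fin 2)
    (hg : Greedy (Fin.snoc c 1)) :
    (∀ d : Fin (n + 1) → Fin 2, val d = val (Fin.snoc c 1) → d (Fin.last n) = 1) ∧
    Nat.card {d : Fin (n + 1) → Fin 2 // val d = val (Fin.snoc c 1)} =
      Nat.card {d : Fin n → Fin 2 // val d = val c} := by
  have last_eq_one : ∀ d : Fin (n + 1) → Fin 2, val d = val (Fin.snoc c 1) →
      d (Fin.last n) = 1 := fun d hd =>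
    last_eq_one_of_val_eq_add d hg (Fin.snoc_last _ _) 0 (by simp) (by rw [hd, zero_add])
  have val_snoc_one_eq_iff : ∀ e : Fin n → Fin 2,
      val (Fin.snoc e 1 : Fin (n + 1) → Fin 2) = val (Fin.snoc c 1) ↔ val e = val c := by
    simp [val_snoc]
  have snoc_init_eq : ∀ d : Fin (n + 1) → Fin 2, val d = val (Fin.snoc c 1) →
      Fin.snoc (Fin.init d) 1 = d := fun d hd => by
    rw [← last_eq_one d hd]; exact Fin.snoc_init_self d
  refine ⟨last_eq_one, Nat.card_congr
    { toFun := fun d =>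
        ⟨Fin.init d.1, (val_snoc_one_eq_iff _).1 (by rw [snoc_init_eq d.1 d.2]; exact d.2)⟩
      invFun := fun e => ⟨Fin.snoc e.1 1, (val_snoc_one_eq_iff _).2 e.2⟩
      left_inv := fun d => Subtype.ext (snoc_init_eq d.1 d.2)
      right_inv := fun e => Subtype.ext (Fin.init_snoc (α := fun _ => Fin 2) _ _) }⟩
end

section
/- If (cᵢ) is a greedy binary word of length n with c_k = 0 for some k ≤ n, then ∑_{i=k+1}^n cᵢ/φⁱ < 1/φ^k. -/
lemma phi_gt_one : 1 < phi := by
  have h : (1:ℝ) < Real.sqrt 5 := by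
    have := Real.sqrt_lt_sqrt (by norm_num : (0:ℝ) ≤ 1) (by norm_num : (1:ℝ) < 5)
    simpa using this
  unfold phi; linarith

lemma phi_pos : 0 < phi := lt_trans one_pos phi_gt_one

lemma phi_sq : phi ^ 2 = phi + 1 := by
  have h : Real.sqrt 5 ^ 2 = 5 := Real.sq_sqrt (by norm_num)
  unfold phi; nlinarith [h]

lemma inv_phi_sum (m : ℕ) : 1 / phi ^ (m+2) + 1 / phi ^ (m+3) = 1 / phi ^ (m+1) := by
  have hp := phi_pos
  have hne : phi ≠ 0 := ne_of_gt hp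
  have hx : (1/phi) + (1/phi)^2 = 1 := by
    have hs := phi_sq
    field_simp
    nlinarith [hs]
  calc 1 / phi ^ (m+2) + 1 / phi ^ (m+3)
      = (1/phi)^(m+2) + (1/phi)^(m+3) := by simp [div_pow]
    _ = (1/phi)^(m+1) * ((1/phi) + (1/phi)^2) := by ring
    _ = (1/phi)^(m+1) := by rw [hx, mul_one]
    _ = 1 / phi ^ (m+1) := by simp [div_pow]

lemma fin2_cases (a : Fin 2) : a = 0 ∨ a = 1 := by
  have := a.isLt
  rcases a with ⟨v, hv⟩
  interval_cases v
  · left; rfl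
  · right; rfl

lemma key {n : ℕ} (c : Fin n → Fin 2) (hc : Greedy c) (f : ℕ → ℝ)
    (hf : ∀ i (h : i < n), f i = ((c ⟨i, h⟩ : ℕ) : ℝ) / phi ^ (i+1)) :
    ∀ d k (hk : k < n), d = n - k → c ⟨k, hk⟩ = 0 →
      ∑ i ∈ Finset.Ico (k+1) n, f i < 1 / phi ^ (k+1) := by
  intro d
  induction d using Nat.strong_induction_on with
  | _ d IH =>
  intro k hk hd hk0
  have hphi := phi_gt_one
  have hpos := phi_pos
  have hmono : ∀ a b : ℕ, a < b → 1 / phi ^ b < 1 / phi ^ a := by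
    intro a b hab
    exact one_div_lt_one_div_of_lt (pow_pos hpos _) (pow_lt_pow_right₀ hphi hab)
  by_cases h1 : k + 1 < n
  · rw [Finset.sum_eq_sum_Ico_succ_bot h1 f]
    rcases fin2_cases (c ⟨k+1, h1⟩) with hA | hB
    · -- next digit is 0
      have hf1 : f (k+1) = 0 := by rw [hf (k+1) h1, hA]; norm_num
      have hrec := IH (n - (k+1)) (by omega) (k+1) h1 rfl hA
      have := hmono (k+1) (k+2) (by omega)
      rw [hf1]; linarith
    · -- next digit is 1
      have hf1 : f (k+1) = 1 / phi ^ (k+2) := by rw [hf (k+1) h1, hB]; norm_num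
      by_cases h2 : k + 2 < n
      · -- c (k+2) must be 0 by greedy
        have hC : c ⟨k+2, h2⟩ = 0 := by
          rcases fin2_cases (c ⟨k+2, h2⟩) with h | h
          · exact h
          · exact absurd ⟨hk0, hB, h⟩ (hc ⟨k, hk⟩ ⟨k+1, h1⟩ ⟨k+2, h2⟩ rfl rfl)
        rw [Finset.sum_eq_sum_Ico_succ_bot h2 f]
        have hf2 : f (k+2) = 0 := by rw [hf (k+2) h2, hC]; norm_num
        have hrec := IH (n - (k+2)) (by omega) (k+2) h2 rfl hC
        have hsum := inv_phi_sum k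
        rw [hf1, hf2]
        linarith
      · -- k+2 ≥ n : remaining sum empty
        have : Finset.Ico (k+2) n = ∅ := Finset.Ico_eq_empty (by omega)
        rw [this, Finset.sum_empty, hf1]
        have := hmono (k+1) (k+2) (by omega)
        linarith
  · have : Finset.Ico (k+1) n = ∅ := Finset.Ico_eq_empty (by omega)
    rw [this, Finset.sum_empty]
    positivity

theorem greedy_tail_bound {n : ℕ} (c : Fin n → Fin 2) (hc : Greedy c)
    (k : Fin n) (hk : c k = 0) :
    ∑ i ∈ Finset.univ.filter (fun i : Fin n => k < i), ((c i : ℕ) : ℝ) / phi ^ ((i : ℕ) + 1)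
      < 1 / phi ^ ((k : ℕ) + 1) := by
  set f : ℕ → ℝ := fun i => if h : i < n then ((c ⟨i, h⟩ : ℕ) : ℝ) / phi ^ (i+1) else 0 with hfdef
  have hf : ∀ i (h : i < n), f i = ((c ⟨i, h⟩ : ℕ) : ℝ) / phi ^ (i+1) := by
    intro i h; simp [hfdef, h]
  have heq : ∑ i ∈ Finset.univ.filter (fun i : Fin n => k < i),
      ((c i : ℕ) : ℝ) / phi ^ ((i : ℕ) + 1) = ∑ i ∈ Finset.Ico ((k : ℕ)+1) n, f i := by
    refine Finset.sum_bij' (fun (i : Fin n) _ => (i : ℕ))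
      (fun (i : ℕ) hi => (⟨i, (Finset.mem_Ico.mp hi).2⟩ : Fin n)) ?_ ?_ ?_ ?_ ?_
    · intro a ha; simp at ha ⊢; exact ha
    · intro a ha
      simp only [Finset.mem_Ico] at ha
      simp only [Finset.mem_filter, Finset.mem_univ, true_and]
      exact Fin.lt_def.mpr (show (k : ℕ) < a by omega)
    · intro a ha; rfl
    · intro a ha; rfl
    · intro a ha; rw [hf a (Fin.is_lt a)]
  rw [heq]
  exact key c hc f hf (n - k) k k.isLt rfl (by simpa using hk)
end
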